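/- If 𝒢 is a connected groupoid and z ∈ 𝒢₀, then the categories Set^𝒢 / 𝒢ᶜ and Set^{𝒢_z} / 𝒢_zᶜ are monoidally equivalent, where both slices carry the tensor product induced by the conjugation monoid structure. -/

import Mathlib

open CategoryTheory

universe v u

section GSets
variable {G : Type u} [Groupoid.{v} G]

/-- Pointwise product of `𝒢`-sets. -/
@[simps] def prodF (X Y : G ⥤ FintypeCat.{v}) : G ⥤ FintypeCat.{v} where
  obj g := FintypeCat.of (X.obj g × Y.obj g)
  map h := FintypeCat.homMk fun p => (X.map h p.1, Y.map h p.2)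
  map_id g := by ext p <;> (try simp) <;> rfl
  map_comp f h := by ext p <;> (try simp) <;> rfl

/-- Pointwise coproduct (disjoint union) of `𝒢`-sets. -/
@[simps] def coprodF (X Y : G ⥤ FintypeCat.{v}) : G ⥤ FintypeCat.{v} where
  obj g := FintypeCat.of (X.obj g ⊕ Y.obj g)
  map h := FintypeCat.homMk fun p => Sum.map (X.map h) (Y.map h) p
  map_id g := by ext p; cases p <;> (try simp) <;> rfl
  map_comp f h := by ext p; cases p <;> (try simp) <;> rfl

/-- The terminal `𝒢`-set. -/
def termF : G ⥤ FintypeCat.{v} := (Functor.const G).obj (FintypeCat.of PUnit)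

end GSets

section Tensor
variable {G : Type u} [Groupoid.{v} G]
variable (Sb : G ⥤ FintypeCat.{v}) [∀ g : G, Monoid (Sb.obj g)]

/-- The tensor product of two crossed `𝒢`-sets over the `𝒢`-monoid with underlying
`𝒢`-set `Sb`: the underlying `𝒢`-set is the pointwise product, and the structure map
is `(x, y) ↦ θ(x) · τ(y)`. -/
def tensorOver
    (hmul : ∀ ⦃x y : G⦄ (h : x ⟶ y) (a b : Sb.obj x), Sb.map h (a * b) = Sb.map h a * Sb.map h b)
    (u v : Over Sb) : Over Sb :=
  Over.mk (Y := prodF u.left v.left)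
    { app := fun g => FintypeCat.homMk fun p =>
        (show Sb.obj g from u.hom.app g p.1) * (show Sb.obj g from v.hom.app g p.2)
      naturality := by
        intro x y f
        ext p
        have hu : (show Sb.obj y from u.hom.app y (u.left.map f p.1)) =
            Sb.map f (show Sb.obj x from u.hom.app x p.1) :=
          ConcreteCategory.congr_hom (u.hom.naturality f) p.1
        have hv : (show Sb.obj y from v.hom.app y (v.left.map f p.2)) =
            Sb.map f (show Sb.obj x from v.hom.app x p.2) :=
          ConcreteCategory.congr_hom (v.hom.naturality f) p.2
        exact (congrArg₂ (· * ·) hu hv).trans (hmul f _ _).symm }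

/-- The unit object: the terminal `𝒢`-set mapping to the identity elements of the
`𝒢`-monoid. -/
def unitOver
    (hone : ∀ ⦃x y : G⦄ (h : x ⟶ y), Sb.map h (1 : Sb.obj x) = 1) : Over Sb :=
  Over.mk (Y := termF)
    { app := fun g => FintypeCat.homMk fun _ => (1 : Sb.obj g)
      naturality := by
        intro x y f
        ext p
        exact (hone f).symm }

/-- Coproducts in the category of crossed `𝒢`-sets. -/
def coprodOver (u v : Over Sb) : Over Sb :=
  Over.mk (Y := coprodF u.left v.left)
    { app := fun g => FintypeCat.homMk fun p => Sum.elim (u.hom.app g) (v.hom.app g) p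
      naturality := by intro x y f; ext p; cases p with
        | inl a => exact ConcreteCategory.congr_hom (u.hom.naturality f) a
        | inr b => exact ConcreteCategory.congr_hom (v.hom.naturality f) b }

end Tensor

section Conj
variable (G : Type u) [Groupoid.{v} G] [∀ x y : G, Fintype (x ⟶ y)]

/-- The underlying `𝒢`-set of the conjugation action `𝒢ᶜ : 𝒢 ⥤ Mon`, sending an
object to its isotropy group and a morphism `g` to conjugation by `g`. -/
@[simps] def GcBar : G ⥤ FintypeCat.{v} where
  obj x := FintypeCat.of (x ⟶ x)
  map g := FintypeCat.homMk fun n => Groupoid.inv g ≫ n ≫ g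
  map_id x := by ext n; (try simp) <;> rfl
  map_comp f h := by
    ext n
    show Groupoid.inv (f ≫ h) ≫ n ≫ f ≫ h = Groupoid.inv h ≫ (Groupoid.inv f ≫ n ≫ f) ≫ h
    simp [Groupoid.inv_eq_inv]

/-- The monoid structure on the isotropy group `𝒢ₓ`, with multiplication written in
function-composition order as in the paper (`(g·h) = g ∘ h`). -/
instance (x : G) : Monoid ((GcBar G).obj x) := inferInstanceAs (Monoid (End x))

lemma GcBar_map_mul : ∀ ⦃x y : G⦄ (h : x ⟶ y) (a b : (GcBar G).obj x),
    (GcBar G).map h (a * b) = (GcBar G).map h a * (GcBar G).map h b := by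
  intro x y h a b
  change x ⟶ x at a b
  show Groupoid.inv h ≫ (b ≫ a) ≫ h = (Groupoid.inv h ≫ b ≫ h) ≫ Groupoid.inv h ≫ a ≫ h
  simp

lemma GcBar_map_one : ∀ ⦃x y : G⦄ (h : x ⟶ y),
    (GcBar G).map h (1 : (GcBar G).obj x) = 1 := by
  intro x y h
  show Groupoid.inv h ≫ 𝟙 x ≫ h = 𝟙 y
  simp

end Conj

instance singleObjFintypeHom (M : Type v) [Monoid M] [Fintype M] (a b : SingleObj M) :
    Fintype (a ⟶ b) :=
  inferInstanceAs (Fintype M)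


/-! Restriction along the inclusion `𝒢_z ⥤ 𝒢` of the vertex group, an equivalence since `𝒢` is
connected, is an equivalence `Set^𝒢 ≌ Set^{𝒢_z}`, hence of slices over `𝒢ᶜ` and over its
restriction. The restriction of `𝒢ᶜ` is isomorphic to `𝒢_zᶜ` by inversion, and composing with this
isomorphism of monoids gives the equivalence of slices. Both tensor products are pointwise
products of sets, and the isomorphism is multiplicative, so the identity maps of the underlying
sets make the restriction monoidal. -/

section OverMonoidal
variable {G : Type u} [Groupoid.{v} G] (Sb : G ⥤ FintypeCat.{v})

lemma overHom_ext {u v : Over Sb} {f g : u ⟶ v}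
    (h : ∀ (x : G) (p : u.left.obj x), f.left.app x p = g.left.app x p) : f = g :=
  Over.OverMorphism.ext (NatTrans.ext (funext fun x => FintypeCat.hom_ext _ _ (h x)))

lemma overHom_w_apply {u v : Over Sb} (f : u ⟶ v) (x : G) (p : u.left.obj x) :
    v.hom.app x (f.left.app x p) = u.hom.app x p :=
  ConcreteCategory.congr_hom (NatTrans.congr_app (Over.w f) x) p

variable [∀ g : G, Monoid (Sb.obj g)]
variable (hmul : ∀ ⦃x y : G⦄ (h : x ⟶ y) (a b : Sb.obj x),
  Sb.map h (a * b) = Sb.map h a * Sb.map h b)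
variable (hone : ∀ ⦃x y : G⦄ (h : x ⟶ y), Sb.map h (1 : Sb.obj x) = 1)

def tensorOverHom {u u' v v' : Over Sb} (f : u ⟶ u') (g : v ⟶ v') :
    tensorOver Sb hmul u v ⟶ tensorOver Sb hmul u' v' :=
  Over.homMk
    { app := fun x => FintypeCat.homMk fun p => (f.left.app x p.1, g.left.app x p.2)
      naturality := fun x y h => FintypeCat.hom_ext _ _ fun p =>
        Prod.ext (ConcreteCategory.congr_hom (f.left.naturality h) p.1)
          (ConcreteCategory.congr_hom (g.left.naturality h) p.2) }
    (by
      ext x p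
      exact congrArg₂ (fun a b : Sb.obj x => a * b)
        (overHom_w_apply Sb f x p.1) (overHom_w_apply Sb g x p.2))

def tensorOverAssoc (u v w : Over Sb) :
    tensorOver Sb hmul (tensorOver Sb hmul u v) w ≅ tensorOver Sb hmul u (tensorOver Sb hmul v w) :=
  Over.isoMk
    (NatIso.ofComponents (fun _ => FintypeCat.equivEquivIso (Equiv.prodAssoc _ _ _))
      (fun _ => FintypeCat.hom_ext _ _ fun _ => rfl))
    (by ext x p; exact (mul_assoc (G := Sb.obj x) _ _ _).symm)

def tensorOverLeftUnitor (u : Over Sb) : tensorOver Sb hmul (unitOver Sb hone) u ≅ u :=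
  Over.isoMk
    (NatIso.ofComponents (fun _ => FintypeCat.equivEquivIso (Equiv.punitProd _))
      (fun _ => FintypeCat.hom_ext _ _ fun _ => rfl))
    (by ext x p; exact (one_mul (M := Sb.obj x) _).symm)

def tensorOverRightUnitor (u : Over Sb) : tensorOver Sb hmul u (unitOver Sb hone) ≅ u :=
  Over.isoMk
    (NatIso.ofComponents (fun _ => FintypeCat.equivEquivIso (Equiv.prodPUnit _))
      (fun _ => FintypeCat.hom_ext _ _ fun _ => rfl))
    (by ext x p; exact (mul_one (M := Sb.obj x) _).symm)

abbrev overMonoidalStruct : MonoidalCategoryStruct (Over Sb) where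
  tensorObj := tensorOver Sb hmul
  whiskerLeft u _ _ g := tensorOverHom Sb hmul (𝟙 u) g
  whiskerRight f w := tensorOverHom Sb hmul f (𝟙 w)
  tensorHom := tensorOverHom Sb hmul
  tensorUnit := unitOver Sb hone
  associator := tensorOverAssoc Sb hmul
  leftUnitor := tensorOverLeftUnitor Sb hmul hone
  rightUnitor := tensorOverRightUnitor Sb hmul hone

/- The structure isomorphisms are the canonical bijections of products of sets, so every
coherence condition holds pointwise by `rfl`. -/
abbrev overMonoidal : MonoidalCategory (Over Sb) :=
  letI := overMonoidalStruct Sb hmul hone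
  MonoidalCategory.ofTensorHom
    (id_tensorHom_id := fun _ _ => overHom_ext Sb fun _ _ => rfl)
    (id_tensorHom := fun _ _ _ _ => rfl)
    (tensorHom_id := fun _ _ => rfl)
    (tensorHom_comp_tensorHom := fun _ _ _ _ => overHom_ext Sb fun _ _ => rfl)
    (associator_naturality := fun _ _ _ => overHom_ext Sb fun _ _ => rfl)
    (leftUnitor_naturality := fun _ => overHom_ext Sb fun _ _ => rfl)
    (rightUnitor_naturality := fun _ => overHom_ext Sb fun _ _ => rfl)
    (pentagon := fun _ _ _ _ => overHom_ext Sb fun _ _ => rfl)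
    (triangle := fun _ _ => overHom_ext Sb fun _ _ => rfl)

end OverMonoidal

section OverRestrict
variable {H : Type*} [Groupoid.{v} H] {G : Type u} [Groupoid.{v} G]
variable {S : G ⥤ FintypeCat.{v}} {T : H ⥤ FintypeCat.{v}} (ι : H ⥤ G) (e : ι ⋙ S ≅ T)

def overRestrict : Over S ⥤ Over T :=
  Over.post ((Functor.whiskeringLeft _ _ FintypeCat.{v}).obj ι) ⋙ Over.map e.hom

instance [ι.IsEquivalence] : (overRestrict ι e).IsEquivalence := by
  have : (Over.map e.hom).IsEquivalence := by rw [← Over.mapIso_functor]; infer_instance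
  unfold overRestrict
  infer_instance

variable [∀ g : G, Monoid (S.obj g)] [∀ h : H, Monoid (T.obj h)]
variable (hmulS : ∀ ⦃x y : G⦄ (h : x ⟶ y) (a b : S.obj x),
  S.map h (a * b) = S.map h a * S.map h b)
variable (honeS : ∀ ⦃x y : G⦄ (h : x ⟶ y), S.map h (1 : S.obj x) = 1)
variable (hmulT : ∀ ⦃x y : H⦄ (h : x ⟶ y) (a b : T.obj x),
  T.map h (a * b) = T.map h a * T.map h b)
variable (honeT : ∀ ⦃x y : H⦄ (h : x ⟶ y), T.map h (1 : T.obj x) = 1)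

def overRestrictCoreMonoidal
    (he_mul : ∀ (x : H) (a b : S.obj (ι.obj x)),
      e.hom.app x (a * b) = e.hom.app x a * e.hom.app x b)
    (he_one : ∀ x : H, e.hom.app x (1 : S.obj (ι.obj x)) = 1) :
    letI := overMonoidal S hmulS honeS
    letI := overMonoidal T hmulT honeT
    (overRestrict ι e).CoreMonoidal :=
  letI := overMonoidal S hmulS honeS
  letI := overMonoidal T hmulT honeT
  { εIso := Over.isoMk (NatIso.ofComponents (fun _ => Iso.refl _)
        (fun _ => FintypeCat.hom_ext _ _ fun _ => rfl))
      (by ext x p; exact he_one x)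
    μIso := fun u v => Over.isoMk (NatIso.ofComponents (fun _ => Iso.refl _)
        (fun _ => FintypeCat.hom_ext _ _ fun _ => rfl))
      (by ext x p; exact he_mul x _ _)
    μIso_hom_natural_left := fun _ _ => overHom_ext T fun _ _ => rfl
    μIso_hom_natural_right := fun _ _ => overHom_ext T fun _ _ => rfl
    associativity := fun _ _ _ => overHom_ext T fun _ _ => rfl
    left_unitality := fun _ => overHom_ext T fun _ _ => rfl
    right_unitality := fun _ => overHom_ext T fun _ _ => rfl }

end OverRestrict

section VertexGroup
variable {G : Type u} [Groupoid.{v} G] (z : G)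

/- The vertex group multiplies in diagrammatic order, `m * n = m ≫ n`, so `SingleObj (z ⟶ z)`
composes in the order opposite to `G`; inversion makes its inclusion into `G` covariant. -/
def vertexGroupInvHom : (z ⟶ z) →* End z where
  toFun n := n⁻¹
  map_one' := inv_one
  map_mul' m n := mul_inv_rev m n

def vertexGroupInclusion : SingleObj (z ⟶ z) ⥤ G := SingleObj.functor (vertexGroupInvHom z)

instance : (vertexGroupInclusion z).Full where
  map_surjective f := ⟨(f : z ⟶ z)⁻¹, inv_inv (G := z ⟶ z) f⟩

instance : (vertexGroupInclusion z).Faithful where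
  map_injective h := inv_injective (G := z ⟶ z) h

lemma vertexGroupInclusion_isEquivalence (hconn : ∀ a b : G, Nonempty (a ⟶ b)) :
    (vertexGroupInclusion z).IsEquivalence where
  essSurj.mem_essImage a :=
    ⟨SingleObj.star _, ⟨(Groupoid.isoEquivHom z a).symm (hconn z a).some⟩⟩

variable [∀ x y : G, Fintype (x ⟶ y)]

def vertexGroupConjIso : vertexGroupInclusion z ⋙ GcBar G ≅ GcBar (SingleObj (z ⟶ z)) :=
  NatIso.ofComponents (fun _ => FintypeCat.equivEquivIso (Equiv.inv (z ⟶ z)))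
    (fun h => FintypeCat.hom_ext _ _ fun n => by
      change (z ⟶ z) at h n
      change ((h⁻¹)⁻¹ * (n * h⁻¹))⁻¹ = h * n⁻¹ * h⁻¹
      group)

lemma vertexGroupConjIso_hom_app_mul (x : SingleObj (z ⟶ z))
    (a b : (GcBar G).obj ((vertexGroupInclusion z).obj x)) :
    (vertexGroupConjIso z).hom.app x (a * b) =
      (vertexGroupConjIso z).hom.app x a * (vertexGroupConjIso z).hom.app x b :=
  mul_inv_rev (G := z ⟶ z) b a

lemma vertexGroupConjIso_hom_app_one (x : SingleObj (z ⟶ z)) :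
    (vertexGroupConjIso z).hom.app x (1 : (GcBar G).obj ((vertexGroupInclusion z).obj x)) = 1 :=
  inv_one (G := z ⟶ z)

end VertexGroup

/-- If `𝒢` is a connected groupoid and `z ∈ 𝒢₀`, then the categories
`Set^𝒢 / 𝒢ᶜ` and `Set^{𝒢_z} / 𝒢_zᶜ` of crossed `𝒢`-sets (resp. crossed `𝒢_z`-sets)
are monoidally equivalent, both slices being equipped with the tensor product induced
by the conjugation monoid structure. -/
theorem slice_over_conjugation_monoidally_equivalent (G : Type u) [Groupoid.{v} G]
    [∀ x y : G, Fintype (x ⟶ y)] (hconn : ∀ a b : G, Nonempty (a ⟶ b)) (z : G) :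
    ∃ (M₁ : MonoidalCategory (Over (GcBar G)))
      (M₂ : MonoidalCategory (Over (GcBar (SingleObj (z ⟶ z))))),
      (∀ u v : Over (GcBar G),
        M₁.toMonoidalCategoryStruct.tensorObj u v =
          tensorOver (GcBar G) (GcBar_map_mul G) u v) ∧
      (M₁.toMonoidalCategoryStruct.tensorUnit = unitOver (GcBar G) (GcBar_map_one G)) ∧
      (∀ u v : Over (GcBar (SingleObj (z ⟶ z))),
        M₂.toMonoidalCategoryStruct.tensorObj u v =
          tensorOver (GcBar (SingleObj (z ⟶ z)))
            (GcBar_map_mul (SingleObj (z ⟶ z))) u v) ∧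
      (M₂.toMonoidalCategoryStruct.tensorUnit =
        unitOver (GcBar (SingleObj (z ⟶ z))) (GcBar_map_one (SingleObj (z ⟶ z)))) ∧
      ∃ (F : Over (GcBar G) ⥤ Over (GcBar (SingleObj (z ⟶ z))))
        (_ : @Functor.Monoidal _ _ M₁ _ _ M₂ F),
        F.IsEquivalence := by
  have := vertexGroupInclusion_isEquivalence z hconn
  let M₁ := overMonoidal _ (GcBar_map_mul G) (GcBar_map_one G)
  let M₂ := overMonoidal _ (GcBar_map_mul (SingleObj (z ⟶ z))) (GcBar_map_one _)
  refine ⟨M₁, M₂, fun _ _ => rfl, rfl, fun _ _ => rfl, rfl, overRestrict _ (vertexGroupConjIso z),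
    (overRestrictCoreMonoidal _ _ _ _ _ _ (vertexGroupConjIso_hom_app_mul z)
      (vertexGroupConjIso_hom_app_one z)).toMonoidal, inferInstance⟩
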